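/- Let (x̄,λ̄) be a KKT point of the unperturbed problem (a,b)=(0,0). The KKT solution map S_KKT is calm at the origin for (x̄,λ̄) if and only if there exist ε > 0 and c > 0 such that for all (x,λ) with ‖(x,λ) − (x̄,λ̄)‖ ≤ ε one has dist((x,λ), S_KKT(0,0)) ≤ c·‖(∇ₓL(x,λ), g(x) − Π_K(λ + g(x)))‖. -/

import Mathlib

open Set Filter Topology Metric Pointwise
open scoped RealInnerProductSpace Classical

noncomputable section

/-- The normal cone of convex analysis: `N_K(z) = {l | ⟪l, y - z⟫ ≤ 0 ∀ y ∈ K}`,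
empty when `z ∉ K`. -/
def nCone {E : Type*} [NormedAddCommGroup E] [InnerProductSpace ℝ E]
    (K : Set E) (z : E) : Set E :=
  {l | z ∈ K ∧ ∀ y ∈ K, ⟪l, y - z⟫ ≤ 0}

/-- The metric projection onto `K`: under the standing assumptions (`K` nonempty,
closed and convex in a finite-dimensional space) the distance minimizer exists and
is unique, so this choice-based definition is exactly the metric projection `Π_K`. -/

def projK {E : Type*} [NormedAddCommGroup E] [InnerProductSpace ℝ E]
    (K : Set E) (z : E) : E :=
  if h : ∃ p, p ∈ K ∧ ∀ y ∈ K, ‖z - p‖ ≤ ‖z - y‖ then h.choose else 0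

/-- A set `D` is a pointed closed convex cone. -/
def PointedClosedConvexCone {E : Type*} [NormedAddCommGroup E] [NormedSpace ℝ E]
    (D : Set E) : Prop :=
  IsClosed D ∧ Convex ℝ D ∧ (∀ t : ℝ, 0 ≤ t → ∀ z ∈ D, t • z ∈ D) ∧ D ∩ (-D) ⊆ {0}

/-- `K` is `C²`-cone reducible at `y`: near `y`, `K` is the inverse image of a pointed
closed convex cone `D` under a twice continuously differentiable map `Ξ` with `Ξ y = 0`
and `Ξ'(y)` surjective.  (Since the target of the reduction is a finite-dimensional
space of dimension at most `dim Y`, it can be taken to be a Euclidean space.) -/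
def C2ConeReducibleAt {Y : Type*} [NormedAddCommGroup Y] [InnerProductSpace ℝ Y]
    (K : Set Y) (y : Y) : Prop :=
  ∃ (m : ℕ) (U : Set Y) (D : Set (EuclideanSpace ℝ (Fin m)))
    (Ξ : Y → EuclideanSpace ℝ (Fin m)),
      IsOpen U ∧ y ∈ U ∧ PointedClosedConvexCone D ∧ ContDiffOn ℝ 2 Ξ U ∧
      Ξ y = 0 ∧ Function.Surjective (fderiv ℝ Ξ y) ∧ K ∩ U = {y' ∈ U | Ξ y' ∈ D}

/-- `K` is `C²`-cone reducible (at every point of `K`). -/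
def C2ConeReducible {Y : Type*} [NormedAddCommGroup Y] [InnerProductSpace ℝ Y]
    (K : Set Y) : Prop :=
  ∀ y ∈ K, C2ConeReducibleAt K y

/-- Calmness of a set-valued map `F` at `z0` for `w0 ∈ F z0`. -/
def Calm {Z W : Type*} [NormedAddCommGroup Z] [NormedAddCommGroup W]
    (F : Z → Set W) (z0 : Z) (w0 : W) : Prop :=
  ∃ κ ε δ : ℝ, 0 < κ ∧ 0 < ε ∧ 0 < δ ∧
    ∀ z : Z, ‖z - z0‖ ≤ ε → ∀ w ∈ F z, ‖w - w0‖ ≤ δ →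
      ∃ w' ∈ F z0, ‖w - w'‖ ≤ κ * ‖z - z0‖

/-- Isolated calmness of a set-valued map `F` at `z0` for `w0 ∈ F z0`. -/
def IsolatedCalm {Z W : Type*} [NormedAddCommGroup Z] [NormedAddCommGroup W]
    (F : Z → Set W) (z0 : Z) (w0 : W) : Prop :=
  ∃ κ ε δ : ℝ, 0 < κ ∧ 0 < ε ∧ 0 < δ ∧
    ∀ z : Z, ‖z - z0‖ ≤ ε → ∀ w ∈ F z, ‖w - w0‖ ≤ δ →
      ‖w - w0‖ ≤ κ * ‖z - z0‖

/-- Metric subregularity of `F` at `z0` for `w0 ∈ F z0`: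
`dist(z, F⁻¹(w0)) ≤ κ · dist(w0, F z ∩ B_δ(w0))` for `z` near `z0`; since the
right-hand side is an infimum over `F z ∩ B_δ(w0)` (`= +∞` when empty), this is
equivalently stated pointwise. -/
def MetricallySubregular {Z W : Type*} [NormedAddCommGroup Z] [NormedAddCommGroup W]
    (F : Z → Set W) (z0 : Z) (w0 : W) : Prop :=
  ∃ κ ε δ : ℝ, 0 < κ ∧ 0 < ε ∧ 0 < δ ∧
    ∀ z : Z, ‖z - z0‖ ≤ ε → ∀ w ∈ F z, ‖w - w0‖ ≤ δ →
      infDist z {z' : Z | w0 ∈ F z'} ≤ κ * ‖w0 - w‖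

/-- `φ` has directional derivative `w` at `z` in direction `h`. -/
def HasDirDeriv {E : Type*} [NormedAddCommGroup E] [NormedSpace ℝ E]
    (φ : E → E) (z h w : E) : Prop :=
  Tendsto (fun t : ℝ => t⁻¹ • (φ (z + t • h) - φ z)) (𝓝[>] (0 : ℝ)) (𝓝 w)

/-- The contingent (Bouligand) tangent cone to `s` at `z`. -/
def contCone {E : Type*} [NormedAddCommGroup E] [NormedSpace ℝ E]
    (s : Set E) (z : E) : Set E :=
  {w | ∃ (t : ℕ → ℝ) (v : ℕ → E), (∀ n, 0 < t n) ∧ Tendsto t atTop (𝓝 0) ∧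
        Tendsto v atTop (𝓝 w) ∧ ∀ n, z + t n • v n ∈ s}

/-- The negative polar cone of a set. -/
def negPolar {E : Type*} [NormedAddCommGroup E] [InnerProductSpace ℝ E]
    (C : Set E) : Set E :=
  {z | ∀ d ∈ C, ⟪z, d⟫ ≤ 0}

/-- The critical cone `C_K(y,u) = T_K(y) ∩ u^⊥`. -/
def criticalCone {E : Type*} [NormedAddCommGroup E] [InnerProductSpace ℝ E]
    (K : Set E) (y u : E) : Set E :=
  contCone K y ∩ {d | ⟪u, d⟫ = 0}

/-- The (outer) second-order tangent set `T²_K(y,h)`. -/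
def secondOrderTangent {E : Type*} [NormedAddCommGroup E] [NormedSpace ℝ E]
    (K : Set E) (y h : E) : Set E :=
  {w | ∃ (t : ℕ → ℝ) (v : ℕ → E), (∀ n, 0 < t n) ∧ Tendsto t atTop (𝓝 0) ∧
        Tendsto v atTop (𝓝 w) ∧ ∀ n, y + t n • h + ((t n) ^ 2 / 2) • v n ∈ K}

variable {X Y : Type*} [NormedAddCommGroup X] [InnerProductSpace ℝ X]
  [FiniteDimensional ℝ X] [NormedAddCommGroup Y] [InnerProductSpace ℝ Y]
  [FiniteDimensional ℝ Y]

/-- The KKT solution map of the canonically perturbed problem: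
`∇f(x) + ∇g(x)*λ = a` and `λ ∈ N_K(g(x) − b)`. -/
def sKKT (f : X → ℝ) (g : X → Y) (K : Set Y) (a : X) (b : Y) : Set (X × Y) :=
  {p | gradient f p.1 + ContinuousLinearMap.adjoint (fderiv ℝ g p.1) p.2 = a ∧
       p.2 ∈ nCone K (g p.1 - b)}

/-- The multiplier set map `M(x,a,b)`. -/
def mSet (f : X → ℝ) (g : X → Y) (K : Set Y) (x : X) (a : X) (b : Y) : Set Y :=
  {l | (x, l) ∈ sKKT f g K a b}

/-- The stationary point map `X_KKT(a,b)`. -/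
def xKKT (f : X → ℝ) (g : X → Y) (K : Set Y) (a : X) (b : Y) : Set X :=
  {x | ∃ l, (x, l) ∈ sKKT f g K a b}

/-- The Hessian `∇²ₓₓL(x,λ)` of the Lagrangian `L(·,λ)` at `x`. -/
def hessLxx (f : X → ℝ) (g : X → Y) (x : X) (l : Y) : X →L[ℝ] X :=
  fderiv ℝ (fun u => gradient (fun v => f v + ⟪l, g v⟫) u) x

/-- The multiplier `l0` is noncritical: the only solutions `(ξ,v)` of
`∇²ₓₓL(x̄,λ̄)ξ + ∇g(x̄)*v = 0`, `g'(x̄)ξ − Π_K'(g(x̄)+λ̄; g'(x̄)ξ+v) = 0` have `ξ = 0`. -/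
def Noncritical (f : X → ℝ) (g : X → Y) (K : Set Y) (x0 : X) (l0 : Y) : Prop :=
  ∀ (ξ : X) (v : Y),
    hessLxx f g x0 l0 ξ + ContinuousLinearMap.adjoint (fderiv ℝ g x0) v = 0 →
    HasDirDeriv (projK K) (g x0 + l0) (fderiv ℝ g x0 ξ + v) (fderiv ℝ g x0 ξ) →
    ξ = 0

/-- Strong calmness of `S_KKT` at the origin for `(x̄,λ̄)`. -/
def StrongCalm (f : X → ℝ) (g : X → Y) (K : Set Y) (x0 : X) (l0 : Y) : Prop :=
  ∃ δ ε κ : ℝ, 0 < δ ∧ 0 < ε ∧ 0 < κ ∧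
    ∀ (a : X) (b : Y), ‖(a, b)‖ ≤ δ →
      ∀ (x : X) (l : Y), (x, l) ∈ sKKT f g K a b → ‖(x, l) - (x0, l0)‖ ≤ ε →
        ‖x - x0‖ + infDist l (mSet f g K x0 0 0) ≤ κ * ‖(a, b)‖

/-- Pseudo-isolated calmness of `X_KKT` at the origin for `x̄` (relative to `λ̄`). -/
def PseudoIsolatedCalm (f : X → ℝ) (g : X → Y) (K : Set Y) (x0 : X) (l0 : Y) : Prop :=
  ∃ ε δ κ : ℝ, 0 < ε ∧ 0 < δ ∧ 0 < κ ∧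
    ∀ (a : X) (b : Y), ‖(a, b)‖ ≤ δ →
      ∀ (x : X) (l : Y), (x, l) ∈ sKKT f g K a b → ‖(x, l) - (x0, l0)‖ ≤ ε →
        ‖x - x0‖ ≤ κ * ‖(a, b)‖


section AuxProjLemmas

variable {E : Type*} [NormedAddCommGroup E] [InnerProductSpace ℝ E] [CompleteSpace E]
variable {K : Set E}

lemma projK_spec (hne : K.Nonempty) (hcl : IsClosed K) (hcv : Convex ℝ K) (z : E) :
    projK K z ∈ K ∧ ∀ y ∈ K, ‖z - projK K z‖ ≤ ‖z - y‖ := by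
  have h : ∃ p, p ∈ K ∧ ∀ y ∈ K, ‖z - p‖ ≤ ‖z - y‖ := by
    obtain ⟨v, hv, hmin⟩ := exists_norm_eq_iInf_of_complete_convex hne hcl.isComplete hcv z
    refine ⟨v, hv, fun y hy => ?_⟩
    rw [hmin]
    exact ciInf_le ⟨0, Set.forall_mem_range.2 fun _ => norm_nonneg _⟩ (⟨y, hy⟩ : K)
  rw [projK, dif_pos h]
  exact h.choose_spec

lemma projK_inner_le (hne : K.Nonempty) (hcl : IsClosed K) (hcv : Convex ℝ K) (z : E) :
    ∀ y ∈ K, ⟪z - projK K z, y - projK K z⟫ ≤ 0 := by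
  obtain ⟨hmem, hmin⟩ := projK_spec hne hcl hcv z
  rw [← norm_eq_iInf_iff_real_inner_le_zero hcv hmem]
  haveI : Nonempty K := hne.to_subtype
  refine le_antisymm (le_ciInf fun w => hmin w w.2) ?_
  exact ciInf_le ⟨0, Set.forall_mem_range.2 fun _ => norm_nonneg _⟩ (⟨_, hmem⟩ : K)

omit [CompleteSpace E] in
lemma proj_unique {z p q : E} (hp : p ∈ K) (hq : q ∈ K)
    (h1 : ∀ y ∈ K, ⟪z - p, y - p⟫ ≤ 0) (h2 : ∀ y ∈ K, ⟪z - q, y - q⟫ ≤ 0) : p = q := by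
  have h3 := h1 q hq
  have h4 := h2 p hp
  have key : ⟪q - p, q - p⟫ ≤ (0 : ℝ) := by
    have e : ⟪q - p, q - p⟫ = ⟪z - p, q - p⟫ + ⟪z - q, p - q⟫ := by
      simp only [inner_sub_left, inner_sub_right]
      linarith [real_inner_comm z p, real_inner_comm z q, real_inner_comm p q]
    rw [e]; linarith
  have h5 : q - p = 0 := real_inner_self_nonpos.mp key
  exact (sub_eq_zero.mp h5).symm

lemma projK_eq_of_nCone (hne : K.Nonempty) (hcl : IsClosed K) (hcv : Convex ℝ K)
    {z l : E} (h : l ∈ nCone K z) : projK K (z + l) = z := by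
  obtain ⟨hz, hl⟩ := h
  refine proj_unique (projK_spec hne hcl hcv (z + l)).1 hz
    (projK_inner_le hne hcl hcv (z + l)) ?_
  intro y hy
  rw [add_sub_cancel_left]
  exact hl y hy

lemma projK_lipschitz (hne : K.Nonempty) (hcl : IsClosed K) (hcv : Convex ℝ K) (u v : E) :
    ‖projK K u - projK K v‖ ≤ ‖u - v‖ := by
  obtain ⟨p, hp⟩ : ∃ p, projK K u = p := ⟨_, rfl⟩
  obtain ⟨q, hq⟩ : ∃ q, projK K v = q := ⟨_, rfl⟩
  rw [hp, hq]
  have h1 := projK_inner_le hne hcl hcv u (projK K v) (projK_spec hne hcl hcv v).1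
  have h2 := projK_inner_le hne hcl hcv v (projK K u) (projK_spec hne hcl hcv u).1
  rw [hp, hq] at h1
  rw [hp, hq] at h2
  have expand : ⟪p - q, p - q⟫ = ⟪u - v, p - q⟫ + ⟪u - p, q - p⟫ + ⟪v - q, p - q⟫ := by
    simp only [inner_sub_left, inner_sub_right]
    linarith [real_inner_comm u p, real_inner_comm u q, real_inner_comm v p,
      real_inner_comm v q, real_inner_comm p q, real_inner_comm u v]
  have h3 : ⟪p - q, p - q⟫ ≤ ⟪u - v, p - q⟫ := by rw [expand]; linarith
  have h4 : ⟪u - v, p - q⟫ ≤ ‖u - v‖ * ‖p - q‖ := real_inner_le_norm _ _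
  have h5 : ‖p - q‖ * ‖p - q‖ ≤ ‖u - v‖ * ‖p - q‖ := by
    rw [← real_inner_self_eq_norm_mul_norm]; linarith
  rcases eq_or_lt_of_le (norm_nonneg (p - q)) with h | h
  · rw [← h]; exact norm_nonneg _
  · exact le_of_mul_le_mul_right h5 h

lemma residual_mem_nCone (hne : K.Nonempty) (hcl : IsClosed K) (hcv : Convex ℝ K) (w : E) :
    w - projK K w ∈ nCone K (projK K w) :=
  ⟨(projK_spec hne hcl hcv w).1, fun y hy => projK_inner_le hne hcl hcv w y hy⟩

lemma projK_continuous (hne : K.Nonempty) (hcl : IsClosed K) (hcv : Convex ℝ K) :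
    Continuous (projK K) :=
  (LipschitzWith.of_dist_le_mul (K := 1) fun u v => by
    simpa [dist_eq_norm] using projK_lipschitz hne hcl hcv u v).continuous

end AuxProjLemmas

lemma norm_mk_le_aux {E F : Type*} [NormedAddCommGroup E] [NormedAddCommGroup F]
    {a : E} {b : F} {r : ℝ} (h1 : ‖a‖ ≤ r) (h2 : ‖b‖ ≤ r) : ‖((a, b) : E × F)‖ ≤ r := by
  rw [Prod.norm_def]
  exact max_le h1 h2

set_option maxHeartbeats 1000000 in
/-- Remark 3.1: `S_KKT` is calm at the origin for `(x̄,λ̄)` iff the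
local error bound `dist((x,λ), S_KKT(0,0)) ≤ c‖(∇ₓL(x,λ), g(x) − Π_K(λ + g(x)))‖`
holds near `(x̄,λ̄)`. -/
theorem stmt_5 (f : X → ℝ) (g : X → Y) (K : Set Y)
    (hf : ContDiff ℝ 2 f) (hg : ContDiff ℝ 2 g)
    (hKne : K.Nonempty) (hKcl : IsClosed K) (hKcv : Convex ℝ K)
    (hKred : C2ConeReducible K)
    (x0 : X) (l0 : Y) (hKKT : (x0, l0) ∈ sKKT f g K 0 0) :
    Calm (fun q : X × Y => sKKT f g K q.1 q.2) ((0 : X), (0 : Y)) (x0, l0)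
    ↔ (∃ ε c : ℝ, 0 < ε ∧ 0 < c ∧ ∀ (x : X) (l : Y), ‖(x, l) - (x0, l0)‖ ≤ ε →
        infDist (x, l) (sKKT f g K 0 0) ≤
          c * ‖(gradient f x + ContinuousLinearMap.adjoint (fderiv ℝ g x) l,
                g x - projK K (l + g x))‖) := by
  classical
  have hgc : Continuous g := hg.continuous
  have hgradcont : Continuous (gradient f) := by
    have h1 : Continuous fun x => fderiv ℝ f x := hf.continuous_fderiv two_ne_zero
    exact (InnerProductSpace.toDual ℝ X).symm.continuous.comp h1
  have hfd : Continuous fun x => fderiv ℝ g x := hg.continuous_fderiv two_ne_zero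
  have hadj : Continuous fun x => ContinuousLinearMap.adjoint (fderiv ℝ g x) :=
    (ContinuousLinearMap.adjoint (𝕜 := ℝ) (E := X) (F := Y)).continuous.comp hfd
  have hR1cont : Continuous fun p : X × Y =>
      gradient f p.1 + ContinuousLinearMap.adjoint (fderiv ℝ g p.1) p.2 := by
    refine (hgradcont.comp continuous_fst).add ?_
    exact isBoundedBilinearMap_apply.continuous.comp
      ((hadj.comp continuous_fst).prodMk continuous_snd)
  have hprojc : Continuous (projK K) := projK_continuous hKne hKcl hKcv
  have hR2cont : Continuous fun p : X × Y => g p.1 - projK K (p.2 + g p.1) :=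
    (hgc.comp continuous_fst).sub
      (hprojc.comp (continuous_snd.add (hgc.comp continuous_fst)))
  have hS00 : IsClosed (sKKT f g K (0 : X) (0 : Y)) := by
    have heq : sKKT f g K (0 : X) (0 : Y) =
        {p : X × Y | gradient f p.1 + ContinuousLinearMap.adjoint (fderiv ℝ g p.1) p.2 = 0}
        ∩ ({p : X × Y | g p.1 ∈ K} ∩ ⋂ y ∈ K, {p : X × Y | ⟪p.2, y - g p.1⟫ ≤ 0}) := by
      ext p
      simp only [sKKT, nCone, Set.mem_setOf_eq, Set.mem_inter_iff, Set.mem_iInter, sub_zero]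
    rw [heq]
    refine (isClosed_eq hR1cont continuous_const).inter
      ((hKcl.preimage (hgc.comp continuous_fst)).inter
        (isClosed_biInter fun y _ => isClosed_le
          (continuous_snd.inner (continuous_const.sub (hgc.comp continuous_fst)))
          continuous_const))
  have hproj0 : projK K (l0 + g x0) = g x0 := by
    have h2 := hKKT.2
    rw [sub_zero] at h2
    have h3 := projK_eq_of_nCone hKne hKcl hKcv h2
    rwa [add_comm] at h3
  constructor
  · -- Calm → error bound
    rintro ⟨κ, εc, δc, hκ, hεc, hδc, hcalm⟩
    set M : ℝ := ‖fderiv ℝ g x0‖ + 1 with hMdef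
    have hM1 : (0 : ℝ) < 1 + M := by positivity
    set m : ℝ := min (εc / (1 + M)) (δc / 2) with hmdef
    have hm0 : 0 < m := lt_min (div_pos hεc hM1) (half_pos hδc)
    set R : X × Y → X × Y := fun p =>
      (gradient f p.1 + ContinuousLinearMap.adjoint (fderiv ℝ g p.1) p.2,
       g p.1 - projK K (p.2 + g p.1)) with hRdef
    have hRcont : Continuous R := hR1cont.prodMk hR2cont
    have hR0 : R (x0, l0) = 0 := by
      rw [← Prod.mk_zero_zero]
      simp only [hRdef]
      refine Prod.ext ?_ ?_
      · simpa using hKKT.1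
      · simp only
        rw [hproj0, sub_self]
    have hU : IsOpen {p : X × Y | ‖fderiv ℝ g p.1‖ < M ∧ ‖R p‖ < m} :=
      (isOpen_lt ((hfd.comp continuous_fst).norm) continuous_const).inter
        (isOpen_lt hRcont.norm continuous_const)
    have hx0U : ((x0, l0) : X × Y) ∈ {p : X × Y | ‖fderiv ℝ g p.1‖ < M ∧ ‖R p‖ < m} := by
      constructor
      · simp only [hMdef]
        exact lt_add_one _
      · rw [hR0]
        simpa using hm0
    obtain ⟨r, hr0, hball⟩ := Metric.isOpen_iff.mp hU _ hx0U
    refine ⟨min (r / 2) (δc / 2), 1 + κ * (1 + M), by positivity, by positivity, ?_⟩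
    intro x l hxl
    have hmemU : ((x, l) : X × Y) ∈ {p : X × Y | ‖fderiv ℝ g p.1‖ < M ∧ ‖R p‖ < m} := by
      apply hball
      rw [Metric.mem_ball, dist_eq_norm]
      have h1 : ‖((x, l) : X × Y) - (x0, l0)‖ ≤ r / 2 := hxl.trans (min_le_left _ _)
      linarith
    obtain ⟨hMx', hRx⟩ := hmemU
    have hMx : ‖fderiv ℝ g x‖ < M := hMx'
    have hM0 : (0 : ℝ) ≤ M := by positivity
    simp only [hRdef] at hRx
    obtain ⟨z, hz⟩ : ∃ z, projK K (l + g x) = z := ⟨_, rfl⟩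
    rw [hz] at hRx ⊢
    obtain ⟨l', hl'⟩ : ∃ v, l + g x - z = v := ⟨_, rfl⟩
    obtain ⟨b', hb'⟩ : ∃ v, g x - z = v := ⟨_, rfl⟩
    obtain ⟨a', ha'⟩ : ∃ v,
      gradient f x + ContinuousLinearMap.adjoint (fderiv ℝ g x) l' = v := ⟨_, rfl⟩
    obtain ⟨N, hN⟩ : ∃ N, ‖((gradient f x + ContinuousLinearMap.adjoint (fderiv ℝ g x) l,
        g x - z) : X × Y)‖ = N := ⟨_, rfl⟩
    rw [hN] at hRx ⊢
    have hNnn : 0 ≤ N := by rw [← hN]; exact norm_nonneg _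
    have hn1 : ‖gradient f x + ContinuousLinearMap.adjoint (fderiv ℝ g x) l‖ ≤ N := by
      rw [← hN]
      exact norm_fst_le ((gradient f x + ContinuousLinearMap.adjoint (fderiv ℝ g x) l,
        g x - z) : X × Y)
    have hn2 : ‖g x - z‖ ≤ N := by
      rw [← hN]
      exact norm_snd_le ((gradient f x + ContinuousLinearMap.adjoint (fderiv ℝ g x) l,
        g x - z) : X × Y)
    have hmem : ((x, l') : X × Y) ∈ sKKT f g K a' b' := by
      show gradient f x + ContinuousLinearMap.adjoint (fderiv ℝ g x) l' = a' ∧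
        l' ∈ nCone K (g x - b')
      refine ⟨ha', ?_⟩
      have hgb : g x - b' = z := by rw [← hb']; abel
      rw [hgb]
      have hres := residual_mem_nCone hKne hKcl hKcv (l + g x)
      rw [hz, hl'] at hres
      exact hres
    have hl'l : l' - l = g x - z := by rw [← hl']; abel
    have ha'bound : ‖a'‖ ≤ (1 + M) * N := by
      have ha'eq : a' = (gradient f x + ContinuousLinearMap.adjoint (fderiv ℝ g x) l) +
          ContinuousLinearMap.adjoint (fderiv ℝ g x) (l' - l) := by
        rw [← ha', map_sub]; abel
      have hadjnorm : ‖ContinuousLinearMap.adjoint (fderiv ℝ g x)‖ = ‖fderiv ℝ g x‖ :=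
        LinearIsometryEquiv.norm_map _ _
      calc ‖a'‖ ≤ ‖gradient f x + ContinuousLinearMap.adjoint (fderiv ℝ g x) l‖ +
            ‖ContinuousLinearMap.adjoint (fderiv ℝ g x) (l' - l)‖ := by
            rw [ha'eq]; exact norm_add_le _ _
        _ ≤ N + ‖fderiv ℝ g x‖ * ‖l' - l‖ := by
            refine add_le_add hn1 ?_
            rw [← hadjnorm]
            exact ContinuousLinearMap.le_opNorm _ _
        _ ≤ N + M * N := by
            refine add_le_add le_rfl ?_
            rw [hl'l]
            exact mul_le_mul hMx.le hn2 (norm_nonneg _) hM0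
        _ = (1 + M) * N := by ring
    have hb'bound : ‖b'‖ ≤ (1 + M) * N := by
      rw [← hb']
      refine hn2.trans ?_
      nlinarith [hNnn, hM0]
    have habN : ‖((a', b') : X × Y)‖ ≤ (1 + M) * N := norm_mk_le_aux ha'bound hb'bound
    have habεc : ‖((a', b') : X × Y)‖ ≤ εc := by
      have h1 : N ≤ εc / (1 + M) := (hRx.trans_le (min_le_left _ _)).le
      calc ‖((a', b') : X × Y)‖ ≤ (1 + M) * N := habN
        _ ≤ (1 + M) * (εc / (1 + M)) := mul_le_mul_of_nonneg_left h1 hM1.le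
        _ = εc := by field_simp
    have hxx0 : ‖x - x0‖ ≤ δc / 2 := by
      have h1 : ‖x - x0‖ ≤ ‖((x, l) : X × Y) - (x0, l0)‖ := by
        rw [Prod.mk_sub_mk]
        exact norm_fst_le ((x - x0, l - l0) : X × Y)
      exact h1.trans (hxl.trans (min_le_right _ _))
    have hll0 : ‖l - l0‖ ≤ δc / 2 := by
      have h1 : ‖l - l0‖ ≤ ‖((x, l) : X × Y) - (x0, l0)‖ := by
        rw [Prod.mk_sub_mk]
        exact norm_snd_le ((x - x0, l - l0) : X × Y)
      exact h1.trans (hxl.trans (min_le_right _ _))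
    have hNδ : N ≤ δc / 2 := (hRx.trans_le (min_le_right _ _)).le
    have hnear : ‖((x, l') : X × Y) - (x0, l0)‖ ≤ δc := by
      rw [Prod.mk_sub_mk]
      refine norm_mk_le_aux (by linarith) ?_
      calc ‖l' - l0‖ ≤ ‖l' - l‖ + ‖l - l0‖ := by
            have h2 : l' - l0 = (l' - l) + (l - l0) := by abel
            rw [h2]; exact norm_add_le _ _
        _ ≤ N + δc / 2 := by
            refine add_le_add ?_ hll0
            rw [hl'l]; exact hn2
        _ ≤ δc := by linarith
    have hzero : ‖((a', b') : X × Y) - ((0 : X), (0 : Y))‖ ≤ εc := by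
      rw [Prod.mk_zero_zero, sub_zero]
      exact habεc
    obtain ⟨w', hw'S, hw'd⟩ := hcalm ((a', b') : X × Y) hzero ((x, l') : X × Y) hmem hnear
    refine le_trans (infDist_le_dist_of_mem hw'S) ?_
    have hd1 : dist ((x, l) : X × Y) ((x, l') : X × Y) ≤ N := by
      rw [dist_eq_norm, Prod.mk_sub_mk, sub_self]
      have h2 : ‖(((0 : X), l - l') : X × Y)‖ = ‖l - l'‖ := by
        rw [Prod.norm_def]
        simp
      rw [h2, norm_sub_rev, hl'l]
      exact hn2
    have hd2 : dist ((x, l') : X × Y) w' ≤ κ * ((1 + M) * N) := by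
      rw [dist_eq_norm]
      refine hw'd.trans ?_
      rw [Prod.mk_zero_zero, sub_zero]
      exact mul_le_mul_of_nonneg_left habN hκ.le
    calc dist ((x, l) : X × Y) w'
        ≤ dist ((x, l) : X × Y) ((x, l') : X × Y) + dist ((x, l') : X × Y) w' :=
          dist_triangle _ _ _
      _ ≤ N + κ * ((1 + M) * N) := add_le_add hd1 hd2
      _ = (1 + κ * (1 + M)) * N := by ring
  · -- error bound → Calm
    rintro ⟨ε, c, hε, hc, hEB⟩
    refine ⟨2 * c, 1, ε, by positivity, one_pos, hε, ?_⟩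
    rintro ⟨a, b⟩ hab ⟨x, l⟩ hw hwd
    simp only [sKKT, Set.mem_setOf_eq] at hw
    obtain ⟨hw1, hw2⟩ := hw
    have hzp : projK K (g x - b + l) = g x - b := projK_eq_of_nCone hKne hKcl hKcv hw2
    have hnab : ‖((a, b) : X × Y)‖ = ‖((a, b) : X × Y) - ((0 : X), (0 : Y))‖ := by
      rw [Prod.mk_zero_zero, sub_zero]
    have hna : ‖a‖ ≤ ‖((a, b) : X × Y)‖ := norm_fst_le ((a, b) : X × Y)
    have hnb : ‖b‖ ≤ ‖((a, b) : X × Y)‖ := norm_snd_le ((a, b) : X × Y)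
    have hR2 : ‖g x - projK K (l + g x)‖ ≤ 2 * ‖b‖ := by
      have e : g x - projK K (l + g x)
          = b + (projK K (g x - b + l) - projK K (l + g x)) := by
        rw [hzp]; abel
      rw [e]
      calc ‖b + (projK K (g x - b + l) - projK K (l + g x))‖
          ≤ ‖b‖ + ‖projK K (g x - b + l) - projK K (l + g x)‖ := norm_add_le _ _
        _ ≤ ‖b‖ + ‖(g x - b + l) - (l + g x)‖ :=
            add_le_add le_rfl (projK_lipschitz hKne hKcl hKcv _ _)
        _ = ‖b‖ + ‖b‖ := by
            congr 1
            rw [show (g x - b + l) - (l + g x) = -b by abel, norm_neg]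
        _ = 2 * ‖b‖ := by ring
    have hpair : ‖((gradient f x + ContinuousLinearMap.adjoint (fderiv ℝ g x) l,
        g x - projK K (l + g x)) : X × Y)‖ ≤ 2 * ‖((a, b) : X × Y)‖ := by
      refine norm_mk_le_aux ?_ ?_
      · rw [hw1]
        have := norm_nonneg ((a, b) : X × Y)
        linarith
      · exact hR2.trans (by linarith)
    have hinf : infDist ((x, l) : X × Y) (sKKT f g K 0 0) ≤ 2 * c * ‖((a, b) : X × Y)‖ := by
      refine (hEB x l hwd).trans ?_
      calc c * ‖((gradient f x + ContinuousLinearMap.adjoint (fderiv ℝ g x) l,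
            g x - projK K (l + g x)) : X × Y)‖ ≤ c * (2 * ‖((a, b) : X × Y)‖) :=
            mul_le_mul_of_nonneg_left hpair hc.le
        _ = 2 * c * ‖((a, b) : X × Y)‖ := by ring
    obtain ⟨w', hw'S, hw'⟩ := hS00.exists_infDist_eq_dist ⟨(x0, l0), hKKT⟩ ((x, l) : X × Y)
    refine ⟨w', hw'S, ?_⟩
    rw [← hnab, ← dist_eq_norm, ← hw']
    exact hinf


end
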